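/- arXiv:1302.2309 — 4 statements merged into one kernel-verified Lean document; each statement's English description precedes it below -/
import Mathlib

section
/- Let G be a group acting on a nonempty topological space O in which any two nonempty open subsets have nonempty intersection. Suppose that for each integer m ≥ 1 there is a set R_m of m-tuples of pairwise distinct points of O (called 'regular' m-tuples) such that: (i) for every m-tuple (x_1, …, x_m) of pairwise distinct points of O there exists g ∈ G with (g·x_1, …, g·x_m) ∈ R_m; (ii) for every (x_1, …, x_m) ∈ R_m, the orbit of x_m under the pointwise stabilizer {g ∈ G : g·x_i = x_i for all i = 1, …, m−1} contains a nonempty open subset of O; (iii) if (x_1, …, x_{m+1}) ∈ R_{m+1}, then both (x_1, …, x_{m−1}, x_m) ∈ R_m and (x_1, …, x_{m−1}, x_{m+1}) ∈ R_m. Then for every m ≥ 1 the action of G on O is m-transitive: for any two m-tuples (x_1, …, x_m) and (y_1, …, y_m) of pairwise distinct points of O there exists g ∈ G with g·x_i = y_i for all i = 1, …, m. -/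
/-!
By induction on `m`, the action is `m`-transitive as soon as, for pairwise distinct points
`p₁, …, pₘ, a, b`, the point `b` lies in the orbit of `a` under the pointwise stabilizer
`Fix(p)` of the `pᵢ`. Move `(p, a, b)` to a regular `(m + 2)`-tuple; its truncations `(p, a)` and
`(p, b)` are regular, so the `Fix(p)`-orbits of `a` and `b` both have nonempty interior. In an
irreducible space two such orbits meet, hence coincide.
-/

open MulAction Set Function

section
variable {G O : Type*} [Group G] [MulAction G O]

theorem mem_orbit_fixingSubgroup_range_iff {ι : Type*} {p : ι → O} {a b : O} :
    b ∈ orbit (fixingSubgroup G (range p)) a ↔ ∃ g : G, (∀ i, g • p i = p i) ∧ g • a = b := by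
  simp [mem_orbit_iff, mem_fixingSubgroup_iff]

theorem mem_orbit_fixingSubgroup_range_of_smul {ι : Type*} {p : ι → O} {a b : O} (h : G)
    (hab : h • b ∈ orbit (fixingSubgroup G (range fun i => h • p i)) (h • a)) :
    b ∈ orbit (fixingSubgroup G (range p)) a := by
  obtain ⟨g, hgp, hga⟩ := mem_orbit_fixingSubgroup_range_iff.mp hab
  refine mem_orbit_fixingSubgroup_range_iff.mpr ⟨h⁻¹ * g * h, fun i => ?_, ?_⟩
  · rw [mul_smul, mul_smul, hgp, inv_smul_smul]
  · rw [mul_smul, mul_smul, hga, inv_smul_smul]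

theorem exists_smul_eq_of_forall_mem_orbit_fixingSubgroup
    (htrans : ∀ (m : ℕ) (p : Fin m → O), Injective p → ∀ a b, a ∉ range p → b ∉ range p →
      b ∈ orbit (fixingSubgroup G (range p)) a) :
    ∀ {m : ℕ} {x y : Fin m → O}, Injective x → Injective y → ∃ g : G, ∀ i, g • x i = y i
  | 0, _, _, _, _ => ⟨1, finZeroElim⟩
  | m + 1, x, y, hx, hy => by
    rw [← Fin.snoc_init_self x, Fin.snoc_injective_iff] at hx
    rw [← Fin.snoc_init_self y, Fin.snoc_injective_iff] at hy
    obtain ⟨k, hk⟩ := exists_smul_eq_of_forall_mem_orbit_fixingSubgroup htrans hx.1 hy.1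
    have hkx : k • x (Fin.last m) ∉ range (Fin.init y) := by
      rintro ⟨i, hi⟩
      rw [← hk i, smul_left_cancel_iff] at hi
      exact hx.2 ⟨i, hi⟩
    obtain ⟨g, hgy, hgx⟩ := mem_orbit_fixingSubgroup_range_iff.mp
      (htrans m _ hy.1 _ _ hkx hy.2)
    refine ⟨g * k, Fin.lastCases ?_ fun i => ?_⟩
    · rw [mul_smul, hgx]
    · rw [mul_smul]
      exact (congrArg (g • ·) (hk i)).trans (hgy i)

variable (R : (m : ℕ) → Set (Fin m → O))

theorem snoc_mem_of_snoc_snoc_mem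
    (htrunc : ∀ m, (hm : 1 ≤ m) → ∀ x ∈ R (m + 1),
      (fun i : Fin m => x i.castSucc) ∈ R m ∧
      update (fun i : Fin m => x i.castSucc) ⟨m - 1, Nat.sub_lt hm Nat.one_pos⟩
        (x (Fin.last m)) ∈ R m)
    {m : ℕ} {p : Fin m → O} {a b : O} (h : Fin.snoc (Fin.snoc p a) b ∈ R (m + 2)) :
    Fin.snoc p a ∈ R (m + 1) ∧ Fin.snoc p b ∈ R (m + 1) := by
  obtain ⟨hinit, hupdate⟩ := htrunc (m + 1) (by omega) _ h
  simp only [Fin.snoc_castSucc, Fin.snoc_last] at hinit hupdate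
  exact ⟨hinit, by rwa [← Fin.update_snoc_last (x := a)]⟩

variable [TopologicalSpace O]

theorem orbit_eq_of_interior_nonempty [PreirreducibleSpace O] {a b : O}
    (ha : (interior (orbit G a)).Nonempty) (hb : (interior (orbit G b)).Nonempty) :
    orbit G a = orbit G b := by
  obtain ⟨z, hza, hzb⟩ := nonempty_preirreducible_inter isOpen_interior isOpen_interior ha hb
  exact (orbit_eq_iff.mpr (interior_subset hza)).symm.trans (orbit_eq_iff.mpr (interior_subset hzb))

theorem interior_orbit_fixingSubgroup_nonempty_of_snoc_mem
    (horb : ∀ m, (hm : 1 ≤ m) → ∀ x ∈ R m,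
      ∃ U : Set O, IsOpen U ∧ U.Nonempty ∧
        U ⊆ {y | ∃ g : G, (∀ i : Fin m, (i : ℕ) < m - 1 → g • x i = x i) ∧
          g • x ⟨m - 1, Nat.sub_lt hm Nat.one_pos⟩ = y})
    {m : ℕ} {p : Fin m → O} {a : O} (h : Fin.snoc p a ∈ R (m + 1)) :
    (interior (orbit (fixingSubgroup G (range p)) a)).Nonempty := by
  obtain ⟨U, hU, hUne, hUsub⟩ := horb (m + 1) (by omega) _ h
  refine hUne.mono (hU.subset_interior_iff.mpr fun y hy => ?_)
  obtain ⟨g, hfix, hg⟩ := hUsub hy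
  refine mem_orbit_fixingSubgroup_range_iff.mpr ⟨g, fun i => ?_, ?_⟩
  · simpa using hfix i.castSucc (by simp)
  · simpa using (show g • (Fin.snoc p a : Fin (m + 1) → O) (Fin.last m) = y from hg)

theorem mem_orbit_fixingSubgroup_of_regular [PreirreducibleSpace O]
    (hreg : ∀ m, 1 ≤ m → ∀ x : Fin m → O, Injective x →
      ∃ g : G, (fun i => g • x i) ∈ R m)
    (horb : ∀ m, (hm : 1 ≤ m) → ∀ x ∈ R m,
      ∃ U : Set O, IsOpen U ∧ U.Nonempty ∧
        U ⊆ {y | ∃ g : G, (∀ i : Fin m, (i : ℕ) < m - 1 → g • x i = x i) ∧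
          g • x ⟨m - 1, Nat.sub_lt hm Nat.one_pos⟩ = y})
    (htrunc : ∀ m, (hm : 1 ≤ m) → ∀ x ∈ R (m + 1),
      (fun i : Fin m => x i.castSucc) ∈ R m ∧
      update (fun i : Fin m => x i.castSucc) ⟨m - 1, Nat.sub_lt hm Nat.one_pos⟩
        (x (Fin.last m)) ∈ R m)
    {m : ℕ} {p : Fin m → O} (hp : Injective p) {a b : O} (ha : a ∉ range p) (hb : b ∉ range p) :
    b ∈ orbit (fixingSubgroup G (range p)) a := by
  obtain rfl | hab := eq_or_ne a b
  · exact mem_orbit_self a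
  have hinj : Injective (Fin.snoc (Fin.snoc p a) b : Fin (m + 2) → O) := by
    refine Fin.snoc_injective_of_injective (Fin.snoc_injective_of_injective hp ha) ?_
    rintro ⟨i, hi⟩
    induction i using Fin.lastCases with
    | last => exact hab (by simpa using hi)
    | cast i => exact hb ⟨i, by simpa using hi⟩
  obtain ⟨h, hh⟩ := hreg (m + 2) (by omega) _ hinj
  rw [show (fun i => h • Fin.snoc (Fin.snoc p a) b i) =
      Fin.snoc (Fin.snoc (fun i => h • p i) (h • a)) (h • b) by
    show (h • ·) ∘ _ = _
    rw [Fin.comp_snoc, Fin.comp_snoc]; rfl] at hh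
  obtain ⟨hha, hhb⟩ := snoc_mem_of_snoc_snoc_mem R htrunc hh
  refine mem_orbit_fixingSubgroup_range_of_smul h ?_
  rw [orbit_eq_of_interior_nonempty
    (interior_orbit_fixingSubgroup_nonempty_of_snoc_mem R horb hha)
    (interior_orbit_fixingSubgroup_nonempty_of_snoc_mem R horb hhb)]
  exact mem_orbit_self _

end

/-- Abstract core of Theorem 2.4: a group action on an "irreducible" topological space
admitting regular tuples with the stated properties is `m`-transitive for every `m ≥ 1`. -/
theorem infinitely_transitive_of_regular_tuples
    {G O : Type*} [Group G] [TopologicalSpace O] [MulAction G O]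
    (hirr : ∀ U V : Set O, IsOpen U → IsOpen V → U.Nonempty → V.Nonempty → (U ∩ V).Nonempty)
    (R : (m : ℕ) → Set (Fin m → O))
    (hreg : ∀ m, 1 ≤ m → ∀ x : Fin m → O, Function.Injective x →
      ∃ g : G, (fun i => g • x i) ∈ R m)
    (horb : ∀ m, (hm : 1 ≤ m) → ∀ x ∈ R m,
      ∃ U : Set O, IsOpen U ∧ U.Nonempty ∧
        U ⊆ {y | ∃ g : G, (∀ i : Fin m, (i : ℕ) < m - 1 → g • x i = x i) ∧
          g • x ⟨m - 1, by omega⟩ = y})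
    (htrunc : ∀ m, (hm : 1 ≤ m) → ∀ x ∈ R (m + 1),
      (fun i : Fin m => x i.castSucc) ∈ R m ∧
      Function.update (fun i : Fin m => x i.castSucc) ⟨m - 1, by omega⟩ (x (Fin.last m))
        ∈ R m) :
    ∀ m, 1 ≤ m → ∀ x y : Fin m → O, Function.Injective x → Function.Injective y →
      ∃ g : G, ∀ i, g • x i = y i := by
  have : PreirreducibleSpace O := ⟨fun U V hU hV ⟨x, _, hx⟩ ⟨y, _, hy⟩ =>
    by simpa using hirr U V hU hV ⟨x, hx⟩ ⟨y, hy⟩⟩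
  intro m _ x y hx hy
  exact exists_smul_eq_of_forall_mem_orbit_fixingSubgroup
    (fun _ _ hp _ _ => mem_orbit_fixingSubgroup_of_regular R hreg horb htrunc hp) hx hy
end

section
/- Let Y be a quasi-compact quasi-separated scheme, and let g_1, …, g_s ∈ Γ(Y, O_Y) be global sections such that the basic open subsets Y_{g_1}, …, Y_{g_s} (the loci where g_i is invertible) cover Y and each Y_{g_i} is an affine scheme. Let C be a subring of Γ(Y, O_Y) containing g_1, …, g_s such that for each i the ring Γ(Y_{g_i}, O_Y) is equal to the localization at (the restriction of) g_i of the image of C under the restriction map Γ(Y, O_Y) → Γ(Y_{g_i}, O_Y); that is, Γ(Y_{g_i}, O_Y) is generated as a ring by the image of C together with the inverse of the restriction of g_i. Then the canonical morphism Y → Spec C induced by the inclusion C ↪ Γ(Y, O_Y) is an open immersion, and it restricts to isomorphisms Y_{g_i} ≅ (Spec C)_{g_i} onto the corresponding basic open subsets of Spec C. -/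
/-!
Write `f : Y ⟶ Spec C` and `D(c)` for the basic opens of `Spec C`. Then `f⁻¹ D(g i) = Y_{g i}`,
and on sections `f` restricts to the map `C[1/g i] → Γ(Y_{g i}) = Γ(Y)[1/g i]` (the equality
holds because `Y` is qcqs) induced by the inclusion `C ⊆ Γ(Y)`. That map is injective because
localization is exact, and it is surjective by the generation hypothesis. Since `Y_{g i}` and
`D(g i)` are affine, `f` is an isomorphism over each `D(g i)`. As the `Y_{g i}` cover `Y`, `f`
lands in `⋃ D(g i)`. Being an open immersion is local on the target, so `f` is an open immersion,
and it maps `Y_{g i}` onto `D(g i)`.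
-/

open AlgebraicGeometry CategoryTheory TopologicalSpace

universe u

theorem IsLocalization.Away.bijective_of_closure_eq_top {R S A B : Type*} [CommRing R]
    [CommRing S] [CommRing A] [CommRing B] [Algebra R A] [Algebra S B] {φ : R →+* S}
    (hφ : Function.Injective φ) (c : R) [IsLocalization.Away c A] [IsLocalization.Away (φ c) B]
    (ψ : A →+* B) (hψ : ∀ x, ψ (algebraMap R A x) = algebraMap S B (φ x))
    (hgen : ∀ h : B, h * algebraMap S B (φ c) = 1 →
      Subring.closure (algebraMap S B '' Set.range φ ∪ {h}) = ⊤) :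
    Function.Bijective ψ := by
  have : IsLocalization ((Submonoid.powers c).map φ) B := by
    rwa [Submonoid.map_powers]
  have hψ_eq : ψ = IsLocalization.map B φ (Submonoid.powers c).le_comap_map :=
    IsLocalization.ringHom_ext (Submonoid.powers c) <| RingHom.ext fun x ↦ by simp [hψ]
  refine ⟨hψ_eq ▸ IsLocalization.map_injective_of_injective _ _ _ hφ, ?_⟩
  set h := ψ (IsLocalization.Away.invSelf c)
  have hh : h * algebraMap S B (φ c) = 1 := by
    rw [← hψ, ← map_mul, mul_comm, IsLocalization.Away.mul_invSelf, map_one]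
  have hle : Subring.closure (algebraMap S B '' Set.range φ ∪ {h}) ≤ ψ.range := by
    rw [Subring.closure_le]
    rintro _ (⟨_, ⟨x, rfl⟩, rfl⟩ | rfl)
    · exact ⟨_, hψ x⟩
    · exact ⟨_, rfl⟩
  exact RingHom.range_eq_top.mp (top_le_iff.mp (hgen h hh ▸ hle))

namespace AlgebraicGeometry

lemma isIso_morphismRestrict_of_bijective_appLE {X Y : Scheme.{u}} {f : X ⟶ Y} {U : Y.Opens}
    {V : X.Opens} (h : f ⁻¹ᵁ U = V) (hU : IsAffineOpen U) (hV : IsAffineOpen V)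
    (hf : Function.Bijective (f.appLE U V h.ge)) : IsIso (f ∣_ U) := by
  subst h
  have : IsAffine U := hU
  have : IsAffine (f ⁻¹ᵁ U) := hV
  have : IsIso (f.appLE U (f ⁻¹ᵁ U) le_rfl) := (ConcreteCategory.isIso_iff_bijective _).mpr hf
  have : IsIso (f.resLE U (f ⁻¹ᵁ U) le_rfl).appTop :=
    (MorphismProperty.isomorphisms _).arrow_mk_iso_iff (arrowResLEAppIso f U _ le_rfl) |>.mpr this
  rw [← Scheme.Hom.resLE_eq_morphismRestrict, ← MorphismProperty.isomorphisms.iff,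
    (MorphismProperty.isomorphisms _).arrow_mk_iso_iff (arrowIsoSpecΓOfIsAffine _)]
  exact inferInstanceAs (IsIso (Spec.map _))

lemma Scheme.Hom.subset_range_of_surjective_morphismRestrict {X Y : Scheme.{u}} (f : X ⟶ Y)
    (U : Y.Opens) [Surjective (f ∣_ U)] : (U : Set Y) ⊆ Set.range f := by
  intro y hy
  obtain ⟨x, hx⟩ := (f ∣_ U).surjective ⟨y, hy⟩
  refine ⟨(f ⁻¹ᵁ U).ι x, ?_⟩
  rw [← Scheme.Hom.comp_apply, ← morphismRestrict_ι, Scheme.Hom.comp_apply, hx]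
  rfl

namespace Scheme

variable (X : Scheme.{u}) {R : CommRingCat.{u}} (φ : R ⟶ Γ(X, ⊤))

lemma toSpecΓ_comp_Spec_map_preimage_basicOpen (r : R) :
    (X.toSpecΓ ≫ Spec.map φ) ⁻¹ᵁ (PrimeSpectrum.basicOpen r : (Spec R).Opens) =
      X.basicOpen (φ r) :=
  X.toSpecΓ_preimage_basicOpen (φ r)

lemma toSpecΓ_comp_Spec_map_appLE_algebraMap (U : (Spec R).Opens) (V : X.Opens) (e) (r : R) :
    (X.toSpecΓ ≫ Spec.map φ).appLE U V e (algebraMap R Γ(Spec R, U) r) =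
      X.presheaf.map (homOfLE le_top).op (φ r) := by
  have hTop : (X.toSpecΓ ≫ Spec.map φ).appTop = (Scheme.ΓSpecIso R).hom ≫ φ := by
    rw [Scheme.Hom.comp_appTop, Scheme.toSpecΓ_appTop, Scheme.ΓSpecIso_naturality]
  rw [IsAffineOpen.algebraMap_Spec_obj, ← CommRingCat.comp_apply, ← CommRingCat.comp_apply,
    Category.assoc, Scheme.Hom.map_appLE, Scheme.Hom.appLE, ← Scheme.Hom.appTop, hTop]
  simp

variable {X φ} in
lemma isIso_toSpecΓ_comp_Spec_map_morphismRestrict [CompactSpace X] [QuasiSeparatedSpace X]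
    (hφ : Function.Injective φ) (r : R) (haff : IsAffineOpen (X.basicOpen (φ r)))
    (hgen : ∀ h : Γ(X, X.basicOpen (φ r)),
      h * (X.presheaf.map (homOfLE (le_top : X.basicOpen (φ r) ≤ ⊤)).op) (φ r) = 1 →
      Subring.closure
        ((X.presheaf.map (homOfLE (le_top : X.basicOpen (φ r) ≤ ⊤)).op) '' Set.range φ ∪ {h}) =
          ⊤) :
    IsIso ((X.toSpecΓ ≫ Spec.map φ) ∣_ PrimeSpectrum.basicOpen r) := by
  -- The `Algebra R Γ(Spec R, U)` instance is only found for `U` typed as `(Spec R).Opens`.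
  let D : (Spec R).Opens := PrimeSpectrum.basicOpen r
  have : IsLocalization.Away r Γ(Spec R, D) := by unfold D; infer_instance
  have := isLocalization_basicOpen_of_qcqs isCompact_univ isQuasiSeparated_univ (φ r)
  refine isIso_morphismRestrict_of_bijective_appLE (U := D)
    (X.toSpecΓ_comp_Spec_map_preimage_basicOpen φ r) (IsAffineOpen.Spec_basicOpen r) haff ?_
  exact IsLocalization.Away.bijective_of_closure_eq_top hφ r _
    (X.toSpecΓ_comp_Spec_map_appLE_algebraMap φ D _ _) hgen

end Scheme

end AlgebraicGeometry

/-- Lemma 3.3: let `Y` be a quasi-compact quasi-separated scheme covered by affine basic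
open subsets `Y_{g i}`, and let `C` be a subring of `Γ(Y, O_Y)` containing the `g i` such
that each `Γ(Y_{g i}, O_Y)` is generated as a ring by the image of `C` together with the
inverse of (the restriction of) `g i`. Then the canonical morphism `Y ⟶ Spec C` is an open
immersion, and it maps each `Y_{g i}` onto the basic open subset of `Spec C` defined by
`g i`, hence restricts to isomorphisms `Y_{g i} ≅ (Spec C)_{g i}`. -/
theorem open_immersion_into_spec_subring
    (Y : Scheme.{u}) [CompactSpace Y] [QuasiSeparatedSpace Y]
    (s : ℕ) (g : Fin s → Γ(Y, ⊤))
    (hcover : (⨆ i, Y.basicOpen (g i)) = ⊤)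
    (haffine : ∀ i, IsAffineOpen (Y.basicOpen (g i)))
    (C : Subring Γ(Y, ⊤)) (hgC : ∀ i, g i ∈ C)
    (hgen : ∀ i, ∀ h : Γ(Y, Y.basicOpen (g i)),
      h * (Y.presheaf.map (homOfLE (le_top : Y.basicOpen (g i) ≤ ⊤)).op) (g i) = 1 →
      Subring.closure
        ((Y.presheaf.map (homOfLE (le_top : Y.basicOpen (g i) ≤ ⊤)).op) '' (C : Set Γ(Y, ⊤))
          ∪ {h}) = ⊤) :
    IsOpenImmersion (Y.toSpecΓ ≫ Spec.map (CommRingCat.ofHom C.subtype)) ∧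
      ∀ i, (Y.toSpecΓ ≫ Spec.map (CommRingCat.ofHom C.subtype)).base ''
          (Y.basicOpen (g i) : Set Y)
        = (PrimeSpectrum.basicOpen (⟨g i, hgC i⟩ : C) : Set (PrimeSpectrum C)) := by
  set f := Y.toSpecΓ ≫ Spec.map (CommRingCat.ofHom C.subtype)
  let D i : (Spec (CommRingCat.of C)).Opens := PrimeSpectrum.basicOpen (⟨g i, hgC i⟩ : C)
  have hpre i : f ⁻¹ᵁ D i = Y.basicOpen (g i) := Y.toSpecΓ_comp_Spec_map_preimage_basicOpen _ _
  have hiso i : IsIso (f ∣_ D i) := by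
    refine Y.isIso_toSpecΓ_comp_Spec_map_morphismRestrict C.subtype_injective _ (haffine i) ?_
    rw [show Set.range (CommRingCat.ofHom C.subtype) = C from Subtype.range_coe]
    exact hgen i
  have hrange : Set.range f ⊆ (⨆ i, D i : (Spec (CommRingCat.of C)).Opens) := by
    rintro _ ⟨x, rfl⟩
    obtain ⟨i, hi⟩ := Opens.mem_iSup.mp (hcover.ge (Set.mem_univ x))
    exact Opens.mem_iSup.mpr ⟨i, (hpre i).ge hi⟩
  refine ⟨IsZariskiLocalAtTarget.of_range_subset_iSup D hrange fun i ↦ inferInstance, fun i ↦ ?_⟩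
  rw [← hpre i]
  exact Set.image_preimage_eq_of_subset (f.subset_range_of_surjective_morphismRestrict (D i))
end

section
/- Let k be a field, n a natural number, and X an integral scheme over k that admits a nonempty open subscheme U together with an isomorphism of k-schemes U ≅ 𝔸ⁿ_k, where 𝔸ⁿ_k = Spec k[x_1, …, x_n] is affine n-space over k. Then every unit of the ring Γ(X, O_X) of global regular functions lies in the image of k, i.e. every invertible global regular function on X is a constant. -/
/-!
On an integral scheme, restriction of sections to a nonempty open is injective, so a global unit
is determined by its restriction to `U ≅ 𝔸ⁿ_k`. There it becomes a unit of `k[x_1, …, x_n]`,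
hence a constant, and the compatibility of `U ≅ 𝔸ⁿ_k` with the structure maps to `Spec k` makes
it the restriction of the corresponding constant on `X`.
-/

open AlgebraicGeometry CategoryTheory

lemma MvPolynomial.exists_eq_algebraMap_of_isUnit {σ R : Type*} [CommRing R] [IsReduced R]
    (p : MvPolynomial σ R) (hp : IsUnit p) : ∃ c, p = algebraMap R _ c := by
  obtain ⟨c, -, rfl⟩ := isUnit_iff_eq_C_of_isReduced.mp hp
  exact ⟨c, rfl⟩

lemma CommRingCat.exists_eq_of_isUnit_comp_isIso {R A B : CommRingCat} (φ : R ⟶ A) (ψ : A ⟶ B)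
    [IsIso ψ] (hφ : ∀ a : A, IsUnit a → ∃ c, a = φ c) :
    ∀ b : B, IsUnit b → ∃ c, b = (φ ≫ ψ) c := by
  intro b hb
  obtain ⟨c, hc⟩ := hφ (inv ψ b) (hb.map (inv ψ).hom)
  exact ⟨c, by rw [CommRingCat.comp_apply, ← hc, IsIso.inv_hom_id_apply]⟩

lemma AlgebraicGeometry.Scheme.exists_eq_of_isUnit_of_nonempty_opens {X : Scheme} [IsIntegral X]
    {R : CommRingCat} (φ : R ⟶ Γ(X, ⊤)) {U : X.Opens} (hU : (U : Set X).Nonempty)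
    (h : ∀ v : Γ(U, ⊤), IsUnit v → ∃ c, v = (φ ≫ U.ι.appTop) c) :
    ∀ u : Γ(X, ⊤), IsUnit u → ∃ c, u = φ c := by
  intro u hu
  obtain ⟨x, hx⟩ := hU
  have : Nonempty (U.ι ''ᵁ (⊤ : U.toScheme.Opens)) := ⟨x, by simpa using hx⟩
  have hinj : Function.Injective U.ι.appTop := by
    rw [Opens.ι_appTop]
    exact map_injective_of_isIntegral X _
  obtain ⟨c, hc⟩ := h _ (hu.map U.ι.appTop.hom)
  exact ⟨c, hinj hc⟩

/-- If an integral scheme `X` over a field `k` contains a nonempty open subscheme `U`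
isomorphic over `k` to affine `n`-space `𝔸ⁿ_k = Spec k[x_1, …, x_n]`, then every invertible
global regular function on `X` is a constant, i.e. lies in the image of `k`. -/
theorem units_global_sections_constant_of_open_affineSpace
    {k : Type u} [Field k] (n : ℕ) (X : Scheme.{u}) [IsIntegral X]
    (f : X ⟶ Spec (CommRingCat.of k)) (U : X.Opens) (hU : (U : Set X).Nonempty)
    (e : U.toScheme ≅ Spec (CommRingCat.of (MvPolynomial (Fin n) k)))
    (he : e.hom ≫ Spec.map (CommRingCat.ofHom (algebraMap k (MvPolynomial (Fin n) k)))
        = U.ι ≫ f) :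
    ∀ u : Γ(X, ⊤), IsUnit u →
      ∃ c : k, u = ((Scheme.ΓSpecIso (CommRingCat.of k)).inv ≫ Scheme.Γ.map f.op) c := by
  set φ := CommRingCat.ofHom (algebraMap k (MvPolynomial (Fin n) k))
  rw [Scheme.Γ_map_op]
  have hcompat : (Scheme.ΓSpecIso (CommRingCat.of k)).inv ≫ f.appTop ≫ U.ι.appTop
      = φ ≫ (Scheme.ΓSpecIso _).inv ≫ e.hom.appTop := by
    rw [← Scheme.Hom.comp_appTop, ← he]
    simp [Scheme.ΓSpecIso_inv_naturality_assoc]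
  have : IsIso e.hom.appTop := inferInstanceAs (IsIso (e.hom.app ⊤))
  have hU_units := CommRingCat.exists_eq_of_isUnit_comp_isIso φ
    ((Scheme.ΓSpecIso _).inv ≫ e.hom.appTop) MvPolynomial.exists_eq_algebraMap_of_isUnit
  refine Scheme.exists_eq_of_isUnit_of_nonempty_opens
    ((Scheme.ΓSpecIso (CommRingCat.of k)).inv ≫ f.appTop) hU ?_
  rwa [Category.assoc, hcompat]
end

section
/- Let k be a field, n a natural number, and X an integral scheme over k that admits a nonempty open subscheme U together with an isomorphism of k-schemes U ≅ 𝔸ⁿ_k. Then the function field of X is isomorphic as a k-algebra to the rational function field k(x_1, …, x_n), i.e. to the field of fractions of the polynomial ring k[x_1, …, x_n]. -/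
/-!
The generic point of `X` lies in every nonempty open, so the function field of `X` is the
fraction field of `Γ(X, U)` for the affine open `U`, and `e` identifies `Γ(X, U)` with
`k[x₁, …, xₙ]`. Because `e` lies over `Spec k`, this identification is `k`-linear, hence so
is the induced isomorphism of fraction fields.
-/

open AlgebraicGeometry CategoryTheory

namespace AlgebraicGeometry

variable {X : Scheme.{u}} {U : X.Opens} {A R : CommRingCat.{u}}

noncomputable def Scheme.Opens.ΓIsoOfIsoSpec (e : U.toScheme ≅ Spec R) : R ≅ Γ(X, U) :=
  (Scheme.ΓSpecIso R).symm ≪≫ Scheme.Γ.mapIso e.op ≪≫ U.topIso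

lemma Scheme.Opens.ΓIsoOfIsoSpec_hom (e : U.toScheme ≅ Spec R) :
    (U.ΓIsoOfIsoSpec e).hom = (Scheme.ΓSpecIso R).inv ≫ e.hom.appTop ≫ U.topIso.hom :=
  rfl

lemma Scheme.Opens.comp_ΓIsoOfIsoSpec_hom (e : U.toScheme ≅ Spec R) (φ : A ⟶ R)
    (f : X ⟶ Spec A) (he : e.hom ≫ Spec.map φ = U.ι ≫ f) :
    φ ≫ (U.ΓIsoOfIsoSpec e).hom =
      (Scheme.ΓSpecIso A).inv ≫ f.appTop ≫ X.presheaf.map (homOfLE le_top).op := by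
  have he' := congrArg Scheme.Hom.appTop he
  simp only [Scheme.Hom.comp_appTop] at he'
  rw [ΓIsoOfIsoSpec_hom, ΓSpecIso_inv_naturality_assoc, reassoc_of% he', ι_appTop, topIso_hom]
  erw [← Functor.map_comp]
  rfl

theorem Scheme.exists_ringEquiv_fractionRing_functionField_of_isoSpec [IsIntegral X] [Nonempty U]
    (φ : A ⟶ R) (f : X ⟶ Spec A) (e : U.toScheme ≅ Spec R)
    (he : e.hom ≫ Spec.map φ = U.ι ≫ f) :
    ∃ ψ : FractionRing R ≃+* X.functionField, ∀ a : A,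
      ψ (algebraMap R (FractionRing R) (φ a)) =
        X.presheaf.germ ⊤ (genericPoint X) trivial (f.appTop ((Scheme.ΓSpecIso A).inv a)) := by
  have hU : IsAffineOpen U := IsAffine.of_isIso e.hom
  have := functionField_isFractionRing_of_isAffineOpen X U hU
  refine ⟨IsFractionRing.ringEquivOfRingEquiv (U.ΓIsoOfIsoSpec e).commRingCatIsoToRingEquiv,
    fun a => ?_⟩
  rw [IsFractionRing.ringEquivOfRingEquiv_algebraMap]
  have h := U.comp_ΓIsoOfIsoSpec_hom e φ f he =≫ X.germToFunctionField U
  simp only [Category.assoc, X.presheaf.germ_res] at h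
  exact congr($h a)

end AlgebraicGeometry

/-- If an integral scheme `X` over a field `k` contains a nonempty open subscheme `U`
isomorphic over `k` to affine `n`-space `𝔸ⁿ_k`, then the function field of `X` is
isomorphic as a `k`-algebra to the rational function field `k(x_1, …, x_n)`, i.e. the
field of fractions of the polynomial ring `k[x_1, …, x_n]`. -/
theorem functionField_isomorphic_fractionRing_of_open_affineSpace
    {k : Type u} [Field k] (n : ℕ) (X : Scheme.{u}) [IsIntegral X]
    (f : X ⟶ Spec (CommRingCat.of k)) (U : X.Opens) (hU : (U : Set X).Nonempty)
    (e : U.toScheme ≅ Spec (CommRingCat.of (MvPolynomial (Fin n) k)))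
    (he : e.hom ≫ Spec.map (CommRingCat.ofHom (algebraMap k (MvPolynomial (Fin n) k)))
        = U.ι ≫ f) :
    haveI : Nonempty (⊤ : X.Opens) := ⟨⟨hU.choose, trivial⟩⟩
    letI : Algebra k X.functionField :=
      (((X.germToFunctionField ⊤).hom.comp
        ((Scheme.ΓSpecIso (CommRingCat.of k)).inv ≫ Scheme.Γ.map f.op).hom :
          k →+* X.functionField)).toAlgebra
    letI : Algebra k (FractionRing (MvPolynomial (Fin n) k)) :=
      ((algebraMap (MvPolynomial (Fin n) k) (FractionRing (MvPolynomial (Fin n) k))).comp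
        (algebraMap k (MvPolynomial (Fin n) k))).toAlgebra
    Nonempty (X.functionField ≃ₐ[k] FractionRing (MvPolynomial (Fin n) k)) := by
  have : Nonempty U := hU.to_subtype
  obtain ⟨ψ, hψ⟩ := Scheme.exists_ringEquiv_fractionRing_functionField_of_isoSpec _ f e he
  -- The `k`-algebra structures of the goal are not instances: `(_)` lets unification supply them.
  exact ⟨@AlgEquiv.ofRingEquiv _ _ _ _ _ _ (_) (_) ψ.symm fun c =>
    ψ.symm_apply_eq.mpr (hψ c).symm⟩
end
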